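/- arXiv:1802.04246 — 4 statements merged into one kernel-verified Lean document; each statement's English description precedes it below -/
import Mathlib

section
/- Let L be a compact metrizable group with bi-invariant metric d_L, and for δ > 0 let ℓ_δ denote the Haar measure of the open ball {t ∈ L : d_L(t, 1) < δ}. For any finite group H, any group homomorphism τ : H → L, and any δ > 0, the set B = {x ∈ H : d_L(τ(x), 1) < 2δ} satisfies |B| ≥ ℓ_δ · |H|. -/
open MeasureTheory
open scoped ENNReal

/-- Bohr neighborhood lower bound: if `L` is a compact metrizable group with a
bi-invariant metric and normalized Haar (probability) measure `μ`, `H` a finite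
group, `τ : H →* L` a homomorphism, and `δ > 0`, then the `(2δ, L)`-Bohr
neighborhood `B = {x ∈ H : d(τ x, 1) < 2δ}` satisfies `|B| ≥ μ(ball 1 δ) · |H|`. -/
theorem bohr_neighborhood_lower_bound
    {L : Type*} [Group L] [MetricSpace L] [IsTopologicalGroup L] [CompactSpace L]
    [MeasurableSpace L] [BorelSpace L]
    (hbi : ∀ x y z : L, dist (z * x) (z * y) = dist x y ∧ dist (x * z) (y * z) = dist x y)
    (μ : Measure L) [μ.IsHaarMeasure] [IsProbabilityMeasure μ]
    {H : Type*} [Group H] [Fintype H] (τ : H →* L) (δ : ℝ) (hδ : 0 < δ) :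
    (μ (Metric.ball (1 : L) δ)).toReal * (Fintype.card H : ℝ) ≤
      (({x : H | dist (τ x) 1 < 2 * δ}).ncard : ℝ) := by
  classical
  set s : H → Set L := fun x => Metric.ball (τ x) δ with hs
  set Bf : Finset H := Finset.univ.filter (fun x => dist (τ x) 1 < 2 * δ) with hBf
  -- dist (g⁻¹ * t) 1 = dist t g
  have hdist : ∀ g t : L, dist (g⁻¹ * t) 1 = dist t g := by
    intro g t
    have h := (hbi t g g⁻¹).1
    rwa [inv_mul_cancel] at h
  -- each translate has the same measure
  have hμs : ∀ x : H, μ (s x) = μ (Metric.ball (1 : L) δ) := by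
    intro x
    have hset : s x = (fun t => (τ x)⁻¹ * t) ⁻¹' Metric.ball (1 : L) δ := by
      ext t
      simp only [hs, Set.mem_preimage, Metric.mem_ball, hdist (τ x) t]
    rw [hset]
    exact measure_preimage_mul μ ((τ x)⁻¹) _
  -- pointwise multiplicity bound
  have hmult : ∀ t : L, ((Finset.univ.filter (fun x => t ∈ s x)).card : ℝ≥0∞)
      ≤ (Bf.card : ℝ≥0∞) := by
    intro t
    rcases (Finset.univ.filter (fun x => t ∈ s x)).eq_empty_or_nonempty with h | ⟨x₀, hx₀⟩
    · simp [h]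
    · have hx₀' : t ∈ s x₀ := (Finset.mem_filter.mp hx₀).2
      have hcard : (Finset.univ.filter (fun x => t ∈ s x)).card ≤ Bf.card := by
        apply Finset.card_le_card_of_injOn (fun x => x₀⁻¹ * x)
        · intro x hx
          have hx' : t ∈ s x := (Finset.mem_filter.mp hx).2
          simp only [hBf, Finset.mem_coe, Finset.mem_filter, Finset.mem_univ, true_and]
          have h1 : dist (τ (x₀⁻¹ * x)) 1 = dist (τ x) (τ x₀) := by
            rw [map_mul, map_inv, hdist (τ x₀) (τ x)]
          rw [h1]
          calc dist (τ x) (τ x₀) ≤ dist (τ x) t + dist t (τ x₀) := dist_triangle _ _ _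
            _ < δ + δ := by
                have h2 : dist (τ x) t < δ := by
                  rw [dist_comm]; exact Metric.mem_ball.mp hx'
                have h3 : dist t (τ x₀) < δ := Metric.mem_ball.mp hx₀'
                linarith
            _ = 2 * δ := by ring
        · intro a _ b _ hab
          exact mul_left_cancel hab
      exact_mod_cast hcard
  -- main chain in ℝ≥0∞
  have key : (Fintype.card H : ℝ≥0∞) * μ (Metric.ball (1 : L) δ) ≤ (Bf.card : ℝ≥0∞) := by
    have h1 : (Fintype.card H : ℝ≥0∞) * μ (Metric.ball (1 : L) δ)
        = ∑ x : H, μ (s x) := by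
      simp [hμs, Finset.card_univ]
    have h2 : ∀ x : H, μ (s x) = ∫⁻ t, (s x).indicator (fun _ => (1 : ℝ≥0∞)) t ∂μ := by
      intro x
      exact (lintegral_indicator_one Metric.isOpen_ball.measurableSet).symm
    have h3 : ∑ x : H, μ (s x)
        = ∫⁻ t, ∑ x : H, (s x).indicator (fun _ => (1 : ℝ≥0∞)) t ∂μ := by
      simp_rw [fun x : H => h2 x]
      exact (lintegral_finset_sum _ (fun x _ =>
        measurable_const.indicator Metric.isOpen_ball.measurableSet)).symm
    have h4 : ∀ t : L, ∑ x : H, (s x).indicator (fun _ => (1 : ℝ≥0∞)) t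
        ≤ (Bf.card : ℝ≥0∞) := by
      intro t
      have : ∑ x : H, (s x).indicator (fun _ => (1 : ℝ≥0∞)) t
          = ((Finset.univ.filter (fun x => t ∈ s x)).card : ℝ≥0∞) := by
        simp [Set.indicator_apply, Finset.sum_boole]
      rw [this]
      exact hmult t
    calc (Fintype.card H : ℝ≥0∞) * μ (Metric.ball (1 : L) δ)
        = ∫⁻ t, ∑ x : H, (s x).indicator (fun _ => (1 : ℝ≥0∞)) t ∂μ := by rw [h1, h3]
      _ ≤ ∫⁻ _, (Bf.card : ℝ≥0∞) ∂μ := lintegral_mono h4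
      _ = (Bf.card : ℝ≥0∞) * μ Set.univ := by rw [lintegral_const]
      _ = (Bf.card : ℝ≥0∞) := by simp
  -- convert to reals
  have hBcard : ({x : H | dist (τ x) 1 < 2 * δ}).ncard = Bf.card := by
    rw [Set.ncard_eq_toFinset_card']
    simp [hBf, Set.toFinset_setOf]
  have hfin : (Fintype.card H : ℝ≥0∞) * μ (Metric.ball (1 : L) δ) ≠ ⊤ := by
    exact ENNReal.mul_ne_top (ENNReal.natCast_ne_top _) (measure_ne_top μ _)
  have := ENNReal.toReal_mono (ENNReal.natCast_ne_top _) key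
  simp only [ENNReal.toReal_mul, ENNReal.toReal_natCast] at this
  rw [hBcard]
  linarith [this]
end

section
/- Let G be a group, B a Boolean algebra of subsets of G closed under left translation, and ν a left-invariant finitely additive probability measure on B. If A ∈ B has ν(A) > 0, then for any subset Z ⊆ G there is a finite set F ⊆ G \ Z with |F| ≤ 1/ν(A) such that G \ Z ⊆ F · A · A⁻¹. -/
open Pointwise
/-- If `ν` is a left-invariant finitely additive probability measure on a Boolean
algebra `𝒜` of subsets of a group `G` closed under left translation, and `A ∈ 𝒜`
has `ν A > 0`, then for any `Z ⊆ G` there is a finite `F ⊆ G \ Z` with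
`|F| ≤ 1 / ν A` and `G \ Z ⊆ F · A · A⁻¹`. -/
theorem separating_translates_cover
    {G : Type*} [Group G] (𝒜 : Set (Set G)) (ν : Set G → ℝ)
    (hUniv : Set.univ ∈ 𝒜)
    (hCompl : ∀ X ∈ 𝒜, Xᶜ ∈ 𝒜)
    (hUnion : ∀ X ∈ 𝒜, ∀ Y ∈ 𝒜, X ∪ Y ∈ 𝒜)
    (hTrans : ∀ X ∈ 𝒜, ∀ g : G, (g • X) ∈ 𝒜)
    (hNonneg : ∀ X ∈ 𝒜, 0 ≤ ν X)
    (hProb : ν Set.univ = 1)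
    (hInv : ∀ X ∈ 𝒜, ∀ g : G, ν (g • X) = ν X)
    (hAdd : ∀ X ∈ 𝒜, ∀ Y ∈ 𝒜, Disjoint X Y → ν (X ∪ Y) = ν X + ν Y)
    (A : Set G) (hA : A ∈ 𝒜) (hApos : 0 < ν A) (Z : Set G) :
    ∃ F : Finset G, (↑F : Set G) ⊆ Zᶜ ∧ (F.card : ℝ) ≤ 1 / ν A ∧
      ∀ x ∈ Zᶜ, ∃ f ∈ F, ∃ a ∈ A, ∃ b ∈ A, x = f * a * b⁻¹ := by
  classical
  -- basic facts
  have hEmpty : (∅ : Set G) ∈ 𝒜 := by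
    have := hCompl _ hUniv; simpa using this
  have hνempty : ν (∅ : Set G) = 0 := by
    have h := hAdd _ hUniv _ hEmpty (disjoint_bot_right)
    rw [Set.union_empty, hProb] at h
    linarith
  have hle1 : ∀ X ∈ 𝒜, ν X ≤ 1 := by
    intro X hX
    have h := hAdd X hX Xᶜ (hCompl X hX) disjoint_compl_right
    rw [Set.union_compl_self, hProb] at h
    have := hNonneg Xᶜ (hCompl X hX)
    linarith
  -- the union/sum lemma
  have key : ∀ F : Finset G,
      ((F : Set G).Pairwise fun f g => Disjoint (f • A) (g • A)) →
      (⋃ f ∈ F, f • A) ∈ 𝒜 ∧ ν (⋃ f ∈ F, f • A) = F.card * ν A := by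
    intro F
    induction F using Finset.induction_on with
    | empty => exact fun _ => ⟨by simpa using hEmpty, by simpa using hνempty⟩
    | @insert a F ha ih =>
      intro hp
      have hp' : (F : Set G).Pairwise fun f g => Disjoint (f • A) (g • A) :=
        hp.mono (by simp [Set.subset_insert])
      obtain ⟨hmem, hval⟩ := ih hp'
      have hdisj : Disjoint (a • A) (⋃ f ∈ F, f • A) := by
        rw [Set.disjoint_iUnion_right]
        intro f
        rw [Set.disjoint_iUnion_right]
        intro hf
        exact hp (by simp) (by simp [hf]) (by rintro rfl; exact ha hf)
      have heq : (⋃ f ∈ (insert a F : Finset G), f • A) = a • A ∪ ⋃ f ∈ F, f • A := by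
        simp [Finset.mem_insert, Set.iUnion_or, Set.iUnion_union_distrib]
      constructor
      · rw [heq]; exact hUnion _ (hTrans A hA a) _ hmem
      · rw [heq, hAdd _ (hTrans A hA a) _ hmem hdisj, hInv A hA a, hval,
          Finset.card_insert_of_notMem ha]
        push_cast
        ring
  -- card bound
  have cardBoundR : ∀ F : Finset G,
      ((F : Set G).Pairwise fun f g => Disjoint (f • A) (g • A)) →
      (F.card : ℝ) ≤ 1 / ν A := by
    intro F hp
    obtain ⟨hmem, hval⟩ := key F hp
    have h1 := hle1 _ hmem
    rw [hval] at h1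
    rw [le_div_iff₀ hApos]
    exact h1
  set b : ℕ := ⌊1 / ν A⌋₊ with hb
  have cardBound : ∀ F : Finset G, ((F : Set G).Pairwise fun f g => Disjoint (f • A) (g • A)) →
      F.card ≤ b := fun F hp => Nat.le_floor (cardBoundR F hp)
  set Q : ℕ → Prop := fun n => ∃ F : Finset G, (↑F : Set G) ⊆ Zᶜ ∧
      ((F : Set G).Pairwise fun f g => Disjoint (f • A) (g • A)) ∧ F.card = n with hQ
  have hQ0 : Q 0 := ⟨∅, by simp, by simp, by simp⟩
  set N := Nat.findGreatest Q b with hN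
  have hQN : Q N := Nat.findGreatest_spec (Nat.zero_le b) hQ0
  obtain ⟨F, hFZ, hFp, hFcard⟩ := hQN
  have hAne : A.Nonempty := by
    rcases Set.eq_empty_or_nonempty A with rfl | h
    · rw [hνempty] at hApos; exact absurd hApos (lt_irrefl 0)
    · exact h
  refine ⟨F, hFZ, cardBoundR F hFp, ?_⟩
  intro x hx
  by_contra hcon
  push_neg at hcon
  have hxF : x ∉ F := by
    intro hxF
    obtain ⟨a, ha⟩ := hAne
    exact (by simpa using hcon x hxF a ha a ha : (x : G) ≠ x * a * a⁻¹) (by group)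
  -- x • A is disjoint from all f • A, f ∈ F
  have hdisj : ∀ f ∈ F, Disjoint (x • A) (f • A) := by
    intro f hf
    rw [Set.disjoint_left]
    rintro y ⟨a, ha, rfl⟩ ⟨c, hc, hyc⟩
    simp only [smul_eq_mul] at hyc
    exact hcon f hf c hc a ha (by rw [eq_comm, mul_inv_eq_iff_eq_mul]; exact hyc)
  have hQsucc : Q (N + 1) := by
    refine ⟨insert x F, ?_, ?_, ?_⟩
    · intro y hy
      simp only [Finset.coe_insert, Set.mem_insert_iff] at hy
      rcases hy with rfl | hy
      · exact hx
      · exact hFZ hy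
    · rw [Finset.coe_insert, Set.pairwise_insert_of_symmetric]
      · exact ⟨hFp, fun f hf _ => hdisj f hf⟩
    · rw [Finset.card_insert_of_notMem hxF, hFcard]
  have hle : N + 1 ≤ b := by
    obtain ⟨F', _, hF'p, hF'card⟩ := hQsucc
    rw [← hF'card]
    exact cardBound F' hF'p
  exact Nat.findGreatest_is_greatest (Nat.lt_succ_self N) hle hQsucc
end

section
/- Suppose L is a compact group with bi-invariant metric d, and suppose for every δ-homomorphism f : H → L from a compact group H (with 0 < δ < α) there exists a homomorphism τ : H → L with d(f(x), τ(x)) < 2δ for all x ∈ H. Then for any compact group H, any n ∈ ℕ, and any 0 < δ < α, every δ-approximate (3δ, Lⁿ)-Bohr neighborhood in H contains a (δ, Lⁿ)-Bohr neighborhood in H. -/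
/-- If every `δ`-homomorphism (`0 < δ < α`) from a compact group into the compact
metric group `L` is within `2δ` of an actual homomorphism, then for any compact
group `H`, `n : ℕ` and `0 < δ < α`, every `δ`-approximate `(3δ, Lⁿ)`-Bohr
neighborhood in `H` contains a `(δ, Lⁿ)`-Bohr neighborhood. -/
theorem bohr_in_approx_bohr
    {L : Type} [Group L] [MetricSpace L] [IsTopologicalGroup L] [CompactSpace L]
    (hbi : ∀ x y z : L, dist (z * x) (z * y) = dist x y ∧ dist (x * z) (y * z) = dist x y)
    (α : ℝ)
    (hAGG : ∀ (H : Type) (_ : Group H) (_ : TopologicalSpace H) (_ : CompactSpace H)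
      (_ : IsTopologicalGroup H) (δ : ℝ), 0 < δ → δ < α →
      ∀ f : H → L, f 1 = 1 → (∀ x y : H, dist (f (x * y)) (f x * f y) < δ) →
        ∃ τ : H →* L, ∀ x : H, dist (f x) (τ x) < 2 * δ) :
    ∀ (H : Type) (_ : Group H) (_ : TopologicalSpace H) (_ : CompactSpace H)
      (_ : IsTopologicalGroup H) (n : ℕ) (δ : ℝ), 0 < δ → δ < α →
      ∀ Y : Set H,
        (∃ f : H → (Fin n → L), f 1 = 1 ∧ (∀ x y : H, dist (f (x * y)) (f x * f y) < δ) ∧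
          Y = {x : H | dist (f x) 1 < 3 * δ}) →
        ∃ τ : H →* (Fin n → L), {x : H | dist (τ x) 1 < δ} ⊆ Y := by
  intro H hG hT hC hTG n δ hδ hδα Y ⟨f, hf1, hfd, hY⟩
  have hcomp : ∀ i : Fin n, ∃ τ : H →* L, ∀ x : H, dist (f x i) (τ x) < 2 * δ := by
    intro i
    apply hAGG H hG hT hC hTG δ hδ hδα (fun x => f x i)
    · exact congrFun hf1 i
    · intro x y
      calc dist (f (x * y) i) ((f x * f y) i) ≤ dist (f (x * y)) (f x * f y) :=
            dist_le_pi_dist _ _ i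
        _ < δ := hfd x y
  choose τ hτ using hcomp
  refine ⟨Pi.monoidHom τ, fun x hx => ?_⟩
  rw [hY]
  simp only [Set.mem_setOf_eq] at hx ⊢
  have h1 : dist (f x) (Pi.monoidHom τ x) < 2 * δ := by
    rw [dist_pi_lt_iff (by linarith)]
    exact fun i => hτ i x
  calc dist (f x) 1 ≤ dist (f x) (Pi.monoidHom τ x) + dist (Pi.monoidHom τ x) 1 :=
        dist_triangle _ _ _
    _ < 2 * δ + δ := add_lt_add h1 hx
    _ = 3 * δ := by ring
end

section
/- Let Γ = (V, W; E) be a finite bipartite graph and X ⊆ V, Y ⊆ W nonempty with |X| = |Y|. Suppose the pair (X, Y) is uniformly ε²-good for Γ, i.e., either (i) for all x ∈ X, y ∈ Y, deg(x, Y) ≤ ε²|X| and deg(X, y) ≤ ε²|X|, or (ii) for all x ∈ X, y ∈ Y, deg(x, Y) ≥ (1−ε²)|X| and deg(X, y) ≥ (1−ε²)|X|. Then for any nonempty X₀ ⊆ X and Y₀ ⊆ Y with |X₀| ≥ ε|X| or |Y₀| ≥ ε|Y|, the edge densities satisfy |δ(X₀, Y₀) − δ(X, Y)| ≤ ε, where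 δ(A, B) = e(A, B)/(|A||B|) and e(A,B) is the number of edges between A and B. -/
set_option maxHeartbeats 1000000

private lemma sum_filter_swap {V W : Type*} [DecidableEq V] [DecidableEq W]
    (E : V → W → Prop) [∀ v w, Decidable (E v w)]
    (X₀ : Finset V) (Y₀ : Finset W) :
    ∑ x ∈ X₀, ((Y₀.filter (fun w => E x w)).card : ℝ)
      = ∑ y ∈ Y₀, ((X₀.filter (fun v => E v y)).card : ℝ) := by
  simp only [Finset.card_filter]
  push_cast
  rw [Finset.sum_comm]

private lemma filter_card_lower {α : Type*} [DecidableEq α]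
    (Y₀ Y : Finset α) (h : Y₀ ⊆ Y) (p : α → Prop) [DecidablePred p] :
    ((Y.filter p).card : ℝ) - ((Y.card : ℝ) - Y₀.card) ≤ ((Y₀.filter p).card : ℝ) := by
  have h1 : Y.filter p ⊆ Y₀.filter p ∪ (Y \ Y₀) := by
    intro a ha
    simp only [Finset.mem_filter, Finset.mem_union, Finset.mem_sdiff] at *
    by_cases hm : a ∈ Y₀
    · exact Or.inl ⟨hm, ha.2⟩
    · exact Or.inr ⟨ha.1, hm⟩
  have h2 : (Y.filter p).card ≤ (Y₀.filter p).card + (Y \ Y₀).card :=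
    le_trans (Finset.card_le_card h1) (Finset.card_union_le _ _)
  have h3 : (Y \ Y₀).card = Y.card - Y₀.card := Finset.card_sdiff_of_subset h
  have h4 : Y₀.card ≤ Y.card := Finset.card_le_card h
  rw [h3] at h2
  have h2R : ((Y.filter p).card : ℝ) ≤ ((Y₀.filter p).card : ℝ) + ((Y.card : ℝ) - Y₀.card) := by
    have := (Nat.cast_le (α := ℝ)).mpr h2
    push_cast [Nat.cast_sub h4] at this
    linarith
  linarith

/-- In a finite bipartite graph, a uniformly `ε²`-good pair `(X, Y)` with
`|X| = |Y|` is very regular: for nonempty `X₀ ⊆ X`, `Y₀ ⊆ Y` with `|X₀| ≥ ε|X|`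
or `|Y₀| ≥ ε|Y|`, the edge densities satisfy `|δ(X₀,Y₀) − δ(X,Y)| ≤ ε`. -/
theorem uniformly_good_implies_regular
    {V W : Type*} [DecidableEq V] [DecidableEq W]
    (E : V → W → Prop) [∀ v w, Decidable (E v w)]
    (X : Finset V) (Y : Finset W) (hX : X.Nonempty) (hY : Y.Nonempty)
    (hcard : X.card = Y.card) (ε : ℝ) (hε0 : 0 < ε) (hε1 : ε ≤ 1)
    (hgood :
      (∀ x ∈ X, ∀ y ∈ Y,
          ((Y.filter (fun w => E x w)).card : ℝ) ≤ ε ^ 2 * X.card ∧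
          ((X.filter (fun v => E v y)).card : ℝ) ≤ ε ^ 2 * X.card) ∨
      (∀ x ∈ X, ∀ y ∈ Y,
          (1 - ε ^ 2) * X.card ≤ ((Y.filter (fun w => E x w)).card : ℝ) ∧
          (1 - ε ^ 2) * X.card ≤ ((X.filter (fun v => E v y)).card : ℝ))) :
    ∀ X₀ ⊆ X, ∀ Y₀ ⊆ Y, X₀.Nonempty → Y₀.Nonempty →
      (ε * X.card ≤ X₀.card ∨ ε * Y.card ≤ Y₀.card) →
      |((∑ x ∈ X₀, ((Y₀.filter (fun w => E x w)).card : ℝ)) / (X₀.card * Y₀.card)) -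
        ((∑ x ∈ X, ((Y.filter (fun w => E x w)).card : ℝ)) / (X.card * Y.card))| ≤ ε := by
  intro X₀ hX₀sub Y₀ hY₀sub hX₀ne hY₀ne hbig
  have pX : (0:ℝ) < X.card := by exact_mod_cast hX.card_pos
  have pY : (0:ℝ) < Y.card := by exact_mod_cast hY.card_pos
  have pX₀ : (0:ℝ) < X₀.card := by exact_mod_cast hX₀ne.card_pos
  have pY₀ : (0:ℝ) < Y₀.card := by exact_mod_cast hY₀ne.card_pos
  have pP : (0:ℝ) < (X.card : ℝ) * Y.card := by positivity
  have pP₀ : (0:ℝ) < (X₀.card : ℝ) * Y₀.card := by positivity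
  have hcardR : (X.card : ℝ) = Y.card := by exact_mod_cast hcard
  have hεsq : ε ^ 2 ≤ ε := by nlinarith
  set S := ∑ x ∈ X, ((Y.filter (fun w => E x w)).card : ℝ) with hS
  set S₀ := ∑ x ∈ X₀, ((Y₀.filter (fun w => E x w)).card : ℝ) with hS₀
  have hS0 : 0 ≤ S := Finset.sum_nonneg (fun _ _ => by positivity)
  have hS₀0 : 0 ≤ S₀ := Finset.sum_nonneg (fun _ _ => by positivity)
  obtain ⟨y₀, hy₀⟩ := hY₀ne
  obtain ⟨x₀, hx₀⟩ := hX₀ne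
  have hy₀Y : y₀ ∈ Y := hY₀sub hy₀
  have hx₀X : x₀ ∈ X := hX₀sub hx₀
  rcases hgood with hgood | hgood
  · -- sparse case : both densities in [0, ε]
    have hb : S / ((X.card : ℝ) * Y.card) ≤ ε ^ 2 := by
      rw [div_le_iff₀ pP]
      calc S ≤ ∑ _x ∈ X, ε ^ 2 * (X.card : ℝ) :=
              Finset.sum_le_sum (fun x hx => (hgood x hx y₀ hy₀Y).1)
        _ = (X.card : ℝ) * (ε ^ 2 * X.card) := by rw [Finset.sum_const, nsmul_eq_mul]
        _ = ε ^ 2 * ((X.card : ℝ) * Y.card) := by rw [hcardR]; ring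
    have ha : S₀ / ((X₀.card : ℝ) * Y₀.card) ≤ ε := by
      rw [div_le_iff₀ pP₀]
      rcases hbig with hbig | hbig
      · -- |X₀| ≥ ε|X| : count by columns
        have key : ∀ y ∈ Y₀, ((X₀.filter (fun v => E v y)).card : ℝ) ≤ ε * X₀.card := by
          intro y hy
          have h1 : ((X₀.filter (fun v => E v y)).card : ℝ)
              ≤ ((X.filter (fun v => E v y)).card : ℝ) := by
            exact_mod_cast Finset.card_le_card (Finset.filter_subset_filter _ hX₀sub)
          have h2 := (hgood x₀ hx₀X y (hY₀sub hy)).2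
          have h3 : ε ^ 2 * (X.card : ℝ) ≤ ε * X₀.card := by nlinarith
          linarith
        calc S₀ = ∑ y ∈ Y₀, ((X₀.filter (fun v => E v y)).card : ℝ) :=
                sum_filter_swap E X₀ Y₀
          _ ≤ ∑ _y ∈ Y₀, ε * (X₀.card : ℝ) := Finset.sum_le_sum key
          _ = (Y₀.card : ℝ) * (ε * X₀.card) := by rw [Finset.sum_const, nsmul_eq_mul]
          _ = ε * ((X₀.card : ℝ) * Y₀.card) := by ring
      · -- |Y₀| ≥ ε|Y| : count by rows
        have key : ∀ x ∈ X₀, ((Y₀.filter (fun w => E x w)).card : ℝ) ≤ ε * Y₀.card := by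
          intro x hx
          have h1 : ((Y₀.filter (fun w => E x w)).card : ℝ)
              ≤ ((Y.filter (fun w => E x w)).card : ℝ) := by
            exact_mod_cast Finset.card_le_card (Finset.filter_subset_filter _ hY₀sub)
          have h2 := (hgood x (hX₀sub hx) y₀ hy₀Y).1
          have h3 : ε ^ 2 * (X.card : ℝ) ≤ ε * Y₀.card := by nlinarith
          linarith
        calc S₀ ≤ ∑ _x ∈ X₀, ε * (Y₀.card : ℝ) := Finset.sum_le_sum key
          _ = (X₀.card : ℝ) * (ε * Y₀.card) := by rw [Finset.sum_const, nsmul_eq_mul]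
          _ = ε * ((X₀.card : ℝ) * Y₀.card) := by ring
    have ha0 : 0 ≤ S₀ / ((X₀.card : ℝ) * Y₀.card) := div_nonneg hS₀0 pP₀.le
    have hb0 : 0 ≤ S / ((X.card : ℝ) * Y.card) := div_nonneg hS0 pP.le
    rw [abs_sub_le_iff]
    constructor <;> linarith
  · -- dense case : both densities in [1 - ε, 1]
    have hb1 : S / ((X.card : ℝ) * Y.card) ≤ 1 := by
      rw [div_le_one pP]
      calc S ≤ ∑ _x ∈ X, (Y.card : ℝ) := Finset.sum_le_sum (fun x _ => by
              exact_mod_cast Finset.card_le_card (Finset.filter_subset _ _))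
        _ = (X.card : ℝ) * Y.card := by rw [Finset.sum_const, nsmul_eq_mul]
    have ha1 : S₀ / ((X₀.card : ℝ) * Y₀.card) ≤ 1 := by
      rw [div_le_one pP₀]
      calc S₀ ≤ ∑ _x ∈ X₀, (Y₀.card : ℝ) := Finset.sum_le_sum (fun x _ => by
              exact_mod_cast Finset.card_le_card (Finset.filter_subset _ _))
        _ = (X₀.card : ℝ) * Y₀.card := by rw [Finset.sum_const, nsmul_eq_mul]
    have hb2 : 1 - ε ^ 2 ≤ S / ((X.card : ℝ) * Y.card) := by
      rw [le_div_iff₀ pP]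
      calc (1 - ε ^ 2) * ((X.card : ℝ) * Y.card)
            = (X.card : ℝ) * ((1 - ε ^ 2) * X.card) := by rw [hcardR]; ring
        _ = ∑ _x ∈ X, (1 - ε ^ 2) * (X.card : ℝ) := by rw [Finset.sum_const, nsmul_eq_mul]
        _ ≤ S := Finset.sum_le_sum (fun x hx => (hgood x hx y₀ hy₀Y).1)
    have ha2 : 1 - ε ≤ S₀ / ((X₀.card : ℝ) * Y₀.card) := by
      rw [le_div_iff₀ pP₀]
      rcases hbig with hbig | hbig
      · -- |X₀| ≥ ε|X| : count by columns
        have key : ∀ y ∈ Y₀,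
            (1 - ε) * (X₀.card : ℝ) ≤ ((X₀.filter (fun v => E v y)).card : ℝ) := by
          intro y hy
          have h1 := filter_card_lower X₀ X hX₀sub (fun v => E v y)
          have h2 := (hgood x₀ hx₀X y (hY₀sub hy)).2
          have h3 : ε ^ 2 * (X.card : ℝ) ≤ ε * X₀.card := by nlinarith
          have h4 : ε * (X₀.card : ℝ) ≤ X₀.card := by nlinarith
          linarith
        calc (1 - ε) * ((X₀.card : ℝ) * Y₀.card)
              = (Y₀.card : ℝ) * ((1 - ε) * X₀.card) := by ring
          _ = ∑ _y ∈ Y₀, (1 - ε) * (X₀.card : ℝ) := by rw [Finset.sum_const, nsmul_eq_mul]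
          _ ≤ ∑ y ∈ Y₀, ((X₀.filter (fun v => E v y)).card : ℝ) := Finset.sum_le_sum key
          _ = S₀ := (sum_filter_swap E X₀ Y₀).symm
      · -- |Y₀| ≥ ε|Y| : count by rows
        have key : ∀ x ∈ X₀,
            (1 - ε) * (Y₀.card : ℝ) ≤ ((Y₀.filter (fun w => E x w)).card : ℝ) := by
          intro x hx
          have h1 := filter_card_lower Y₀ Y hY₀sub (fun w => E x w)
          have h2 := (hgood x (hX₀sub hx) y₀ hy₀Y).1
          have h3 : ε ^ 2 * (X.card : ℝ) ≤ ε * Y₀.card := by nlinarith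
          linarith
        calc (1 - ε) * ((X₀.card : ℝ) * Y₀.card)
              = (X₀.card : ℝ) * ((1 - ε) * Y₀.card) := by ring
          _ = ∑ _x ∈ X₀, (1 - ε) * (Y₀.card : ℝ) := by rw [Finset.sum_const, nsmul_eq_mul]
          _ ≤ S₀ := Finset.sum_le_sum key
    rw [abs_sub_le_iff]
    constructor <;> linarith
end
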